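/- Let u ∈ L¹(ℝ) be nonnegative, and for t > 0 set u(·,t) = u * M_{2t}, the solution of the heat equation w_t = w_xx with initial datum u. Define the rescaled solution U(x,t) = sqrt(1+2t) · u( x·sqrt(1+2t), t ). Then U(·,t) converges to M₁ · ∫_ℝ u(x) dx in L¹(ℝ) as t → ∞, where M₁ is the standard Gaussian density of variance 1. -/

import Mathlib

open MeasureTheory Real Filter

/-- The centered Gaussian density on `ℝ` with variance `s`. -/
noncomputable def gauss (s : ℝ) : ℝ → ℝ :=
  fun x => (2 * Real.pi * s) ^ (-(1:ℝ)/2) * Real.exp (-x ^ 2 / (2 * s))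

/-- `heatSol w t = w * M_{2t}`, the solution at time `t` of the heat equation
`w_t = w_xx` with initial datum `w`. -/
noncomputable def heatSol (w : ℝ → ℝ) (t : ℝ) : ℝ → ℝ :=
  fun x => ∫ y, w (x - y) * gauss (2 * t) y

/-!
With `σ = √(1 + 2t)` the heat kernel rescales as `σ M_{2t}(σx - z) = M_{2t/σ²}(x - z/σ)`, so
`U(·,t) - M₁ ∫ u = ∫ u(z) (M_{2t/σ²}(· - z/σ) - M₁) dz`. By Minkowski's integral inequality
its `L¹` norm is at most `∫ |u(z)| ‖M_{2t/σ²}(· - z/σ) - M₁‖₁ dz`. Each of these `L¹` distances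
is at most `2`, and for fixed `z` it tends to `0` by Scheffé's lemma, because `2t/σ² → 1` and
`z/σ → 0`; dominated convergence in `z` concludes.
-/

theorem tendsto_integral_abs_sub_of_tendsto_integral {α ι : Type*} [MeasurableSpace α]
    {μ : Measure α} {l : Filter ι} [l.IsCountablyGenerated] {F : ι → α → ℝ} {f : α → ℝ}
    (hF : ∀ᶠ n in l, Integrable (F n) μ) (hF0 : ∀ᶠ n in l, ∀ᵐ x ∂μ, 0 ≤ F n x)
    (hf : Integrable f μ)
    (hlim : ∀ᵐ x ∂μ, Tendsto (fun n => F n x) l (nhds (f x)))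
    (hint : Tendsto (fun n => ∫ x, F n x ∂μ) l (nhds (∫ x, f x ∂μ))) :
    Tendsto (fun n => ∫ x, |F n x - f x| ∂μ) l (nhds 0) := by
  have hposInt : ∀ n, Integrable (F n) μ → Integrable (fun x => max (f x - F n x) 0) μ :=
    fun n hn => (hf.sub hn).pos_part
  -- `(f - F n)⁺ ≤ |f|` because `F n ≥ 0`
  have hpos : Tendsto (fun n => ∫ x, max (f x - F n x) 0 ∂μ) l (nhds 0) := by
    have := tendsto_integral_filter_of_dominated_convergence (fun x => |f x|)
      (hF.mono fun n hn => (hposInt n hn).aestronglyMeasurable)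
      (hF0.mono fun n hn => hn.mono fun x hx => by
        rw [norm_of_nonneg (le_max_right _ _)]
        exact max_le (by linarith [le_abs_self (f x)]) (abs_nonneg _))
      hf.abs
      (hlim.mono fun x hx => by
        simpa using ((tendsto_const_nhds (x := f x)).sub hx).max
          (tendsto_const_nhds (x := (0:ℝ))))
    simpa using this
  have hsplit : ∀ᶠ n in l,
      (∫ x, F n x ∂μ - ∫ x, f x ∂μ) + 2 * ∫ x, max (f x - F n x) 0 ∂μ = ∫ x, |F n x - f x| ∂μ := by
    filter_upwards [hF] with n hn
    rw [← integral_sub hn hf, ← integral_const_mul,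
      ← integral_add (f := fun x => F n x - f x) (hn.sub hf)
        ((hposInt n hn).const_mul 2)]
    congr 1 with x
    rcases le_total (F n x) (f x) with h | h
    · rw [abs_of_nonpos (by linarith), max_eq_left (by linarith)]; ring
    · rw [abs_of_nonneg (by linarith), max_eq_right (by linarith)]; ring
  simpa using ((hint.sub_const (∫ x, f x ∂μ)).add (hpos.const_mul 2)).congr' hsplit

section KernelOperator

variable {α β : Type*} [MeasurableSpace α] [MeasurableSpace β] {μ : Measure α} {ν : Measure β}
  [SFinite μ] [SFinite ν] {u : β → ℝ}

theorem integral_abs_integral_mul_le {K : β → α → ℝ} {C : ℝ} (hu : Integrable u ν)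
    (hK : AEStronglyMeasurable (Function.uncurry K) (ν.prod μ))
    (hKi : ∀ᵐ z ∂ν, Integrable (K z) μ) (hC : ∀ᵐ z ∂ν, ∫ x, |K z x| ∂μ ≤ C) :
    ∫ x, |∫ z, u z * K z x ∂ν| ∂μ ≤ ∫ z, |u z| * ∫ x, |K z x| ∂μ ∂ν := by
  set F : β × α → ℝ := fun p => u p.1 * K p.1 p.2
  have hFm : AEStronglyMeasurable F (ν.prod μ) := hu.1.comp_fst.mul hK
  have hFnorm : ∀ z, ∫ x, ‖F (z, x)‖ ∂μ = |u z| * ∫ x, |K z x| ∂μ := fun z => by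
    simp only [F, norm_mul, norm_eq_abs, integral_const_mul]
  have hF : Integrable F (ν.prod μ) := by
    refine (integrable_prod_iff hFm).mpr ⟨hKi.mono fun z hz => hz.const_mul (u z), ?_⟩
    refine (hu.norm.mul_const C).mono' hFm.norm.integral_prod_right' ?_
    filter_upwards [hC] with z hz
    rw [norm_of_nonneg (integral_nonneg fun _ => norm_nonneg _), hFnorm, norm_eq_abs]
    exact mul_le_mul_of_nonneg_left hz (abs_nonneg _)
  calc ∫ x, |∫ z, u z * K z x ∂ν| ∂μ
      ≤ ∫ x, ∫ z, ‖F (z, x)‖ ∂ν ∂μ :=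
        integral_mono hF.swap.integral_prod_left.abs hF.swap.integral_norm_prod_left
          fun x => norm_integral_le_integral_norm (fun z => F (z, x))
    _ = ∫ z, ∫ x, ‖F (z, x)‖ ∂μ ∂ν := integral_integral_swap hF.swap.norm
    _ = ∫ z, |u z| * ∫ x, |K z x| ∂μ ∂ν := by simp only [hFnorm]

theorem tendsto_integral_abs_integral_mul_of_tendsto {ι : Type*} {l : Filter ι}
    [l.IsCountablyGenerated] {K : ι → β → α → ℝ} {C : ℝ} (hu : Integrable u ν)
    (hK : ∀ᶠ t in l, AEStronglyMeasurable (Function.uncurry (K t)) (ν.prod μ))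
    (hKi : ∀ᶠ t in l, ∀ᵐ z ∂ν, Integrable (K t z) μ)
    (hC : ∀ᶠ t in l, ∀ᵐ z ∂ν, ∫ x, |K t z x| ∂μ ≤ C)
    (hlim : ∀ᵐ z ∂ν, Tendsto (fun t => ∫ x, |K t z x| ∂μ) l (nhds 0)) :
    Tendsto (fun t => ∫ x, |∫ z, u z * K t z x ∂ν| ∂μ) l (nhds 0) := by
  have hdom : Tendsto (fun t => ∫ z, |u z| * ∫ x, |K t z x| ∂μ ∂ν) l (nhds 0) := by
    simpa using tendsto_integral_filter_of_dominated_convergence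
      (F := fun t z => |u z| * ∫ x, |K t z x| ∂μ) (f := fun _ => 0) (fun z => |u z| * C)
      (hK.mono fun t ht => hu.1.norm.mul ht.norm.integral_prod_right')
      (hC.mono fun t ht => ht.mono fun z hz => by
        rw [norm_of_nonneg
          (mul_nonneg (abs_nonneg _) (integral_nonneg fun _ => abs_nonneg _))]
        exact mul_le_mul_of_nonneg_left hz (abs_nonneg _))
      (hu.abs.mul_const C)
      (hlim.mono fun z hz => by simpa using hz.const_mul |u z|)
  refine squeeze_zero'
    (Eventually.of_forall fun t => integral_nonneg fun _ => abs_nonneg _) ?_ hdom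
  filter_upwards [hK, hKi, hC] with t hKt hKit hCt
  exact integral_abs_integral_mul_le hu hKt hKit hCt

end KernelOperator

lemma gauss_nonneg {s : ℝ} (hs : 0 < s) (x : ℝ) : 0 ≤ gauss s x := by
  unfold gauss; positivity

@[fun_prop]
lemma continuous_gauss (s : ℝ) : Continuous (gauss s) := by
  unfold gauss; fun_prop

lemma continuousAt_gauss_uncurry {s : ℝ} (hs : 0 < s) (x : ℝ) :
    ContinuousAt (fun p : ℝ × ℝ => gauss p.1 p.2) (s, x) := by
  unfold gauss
  fun_prop (disch := simp [hs.ne', pi_ne_zero])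

lemma gauss_eq_mul_exp (s : ℝ) :
    gauss s = fun x => (2 * π * s) ^ (-(1:ℝ)/2) * exp (-(1 / (2 * s)) * x ^ 2) := by
  funext x; unfold gauss; ring_nf

lemma integrable_gauss {s : ℝ} (hs : 0 < s) : Integrable (gauss s) := by
  rw [gauss_eq_mul_exp]
  exact (integrable_exp_neg_mul_sq (by positivity)).const_mul _

lemma integral_gauss {s : ℝ} (hs : 0 < s) : ∫ x, gauss s x = 1 := by
  rw [gauss_eq_mul_exp, integral_const_mul, integral_gaussian,
    show π / (1 / (2 * s)) = 2 * π * s by field_simp, sqrt_eq_rpow, ← rpow_add (by positivity)]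
  norm_num

lemma gauss_le {s : ℝ} (hs : 0 < s) (x : ℝ) : gauss s x ≤ (2 * π * s) ^ (-(1:ℝ)/2) := by
  unfold gauss
  refine mul_le_of_le_one_right (by positivity) (exp_le_one_iff.mpr ?_)
  exact div_nonpos_of_nonpos_of_nonneg (neg_nonpos.mpr (sq_nonneg x)) (by positivity)

lemma integral_abs_gauss_sub_gauss_le_two {s s' : ℝ} (hs : 0 < s) (hs' : 0 < s') (a a' : ℝ) :
    ∫ x, |gauss s (x - a) - gauss s' (x - a')| ≤ 2 := by
  have hi := (integrable_gauss hs).comp_sub_right a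
  have hi' := (integrable_gauss hs').comp_sub_right a'
  calc ∫ x, |gauss s (x - a) - gauss s' (x - a')|
      ≤ ∫ x, (gauss s (x - a) + gauss s' (x - a')) :=
        integral_mono (hi.sub hi').abs (hi.add hi') fun x => by
          simpa [abs_of_nonneg (gauss_nonneg hs _), abs_of_nonneg (gauss_nonneg hs' _)]
            using abs_sub (gauss s (x - a)) (gauss s' (x - a'))
    _ = 2 := by
        rw [integral_add hi hi', integral_sub_right_eq_self (gauss s) a,
          integral_sub_right_eq_self (gauss s') a', integral_gauss hs, integral_gauss hs']
        norm_num

theorem tendsto_integral_abs_gauss_sub_gauss {ι : Type*} {l : Filter ι} [l.IsCountablyGenerated]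
    {s a : ι → ℝ} {s₀ a₀ : ℝ} (hs₀ : 0 < s₀) (hs : Tendsto s l (nhds s₀))
    (ha : Tendsto a l (nhds a₀)) :
    Tendsto (fun n => ∫ x, |gauss (s n) (x - a n) - gauss s₀ (x - a₀)|) l (nhds 0) := by
  have hpos : ∀ᶠ n in l, 0 < s n := hs.eventually (lt_mem_nhds hs₀)
  refine tendsto_integral_abs_sub_of_tendsto_integral
    (hpos.mono fun n hn => (integrable_gauss hn).comp_sub_right _)
    (hpos.mono fun n hn => ae_of_all _ fun x => gauss_nonneg hn _)
    ((integrable_gauss hs₀).comp_sub_right _)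
    (ae_of_all _ fun x => (continuousAt_gauss_uncurry hs₀ _).tendsto.comp
      (hs.prodMk_nhds (tendsto_const_nhds.sub ha)))
    (tendsto_const_nhds.congr' ?_)
  filter_upwards [hpos] with n hn
  rw [integral_sub_right_eq_self (gauss s₀), integral_sub_right_eq_self (gauss (s n)),
    integral_gauss hs₀, integral_gauss hn]

lemma mul_gauss_mul_sub {σ s : ℝ} (hσ : 0 < σ) (hs : 0 < s) (x z : ℝ) :
    σ * gauss s (x * σ - z) = gauss (s / σ ^ 2) (x - z / σ) := by
  have hσ2 : (σ ^ 2) ^ (-(1:ℝ)/2) = σ⁻¹ := by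
    rw [← rpow_natCast, ← rpow_mul hσ.le]
    norm_num [rpow_neg_one]
  unfold gauss
  rw [show 2 * π * (s / σ ^ 2) = 2 * π * s / σ ^ 2 by ring,
    div_rpow (by positivity) (by positivity), hσ2,
    show -(x - z / σ) ^ 2 / (2 * (s / σ ^ 2)) = -(x * σ - z) ^ 2 / (2 * s) by
      field_simp]
  field_simp

lemma heatSol_eq_integral (w : ℝ → ℝ) (t x : ℝ) :
    heatSol w t x = ∫ z, w z * gauss (2 * t) (x - z) := by
  simpa only [heatSol, sub_sub_cancel] using
    integral_sub_left_eq_self (fun z => w z * gauss (2 * t) (x - z)) volume x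

lemma mul_heatSol_mul_eq_integral (w : ℝ → ℝ) {σ t : ℝ} (hσ : 0 < σ) (ht : 0 < t) (x : ℝ) :
    σ * heatSol w t (x * σ) = ∫ z, w z * gauss (2 * t / σ ^ 2) (x - z / σ) := by
  rw [heatSol_eq_integral, ← integral_const_mul]
  congr 1 with z
  rw [mul_left_comm, mul_gauss_mul_sub hσ (by positivity)]

lemma MeasureTheory.Integrable.mul_gauss_comp {w f : ℝ → ℝ} (hw : Integrable w)
    (hf : Continuous f) {s : ℝ} (hs : 0 < s) : Integrable (fun z => w z * gauss s (f z)) :=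
  hw.mul_bdd ((continuous_gauss s).comp hf).aestronglyMeasurable
    (ae_of_all _ fun z => by
      rw [norm_of_nonneg (gauss_nonneg hs _)]
      exact gauss_le hs _)

lemma mul_heatSol_mul_sub_eq_integral {w : ℝ → ℝ} (hw : Integrable w) {σ t : ℝ} (hσ : 0 < σ)
    (ht : 0 < t) (x c : ℝ) :
    σ * heatSol w t (x * σ) - c * ∫ z, w z
      = ∫ z, w z * (gauss (2 * t / σ ^ 2) (x - z / σ) - c) := by
  simp only [mul_sub]
  rw [integral_sub ((hw.mul_gauss_comp (by fun_prop) (by positivity))) (hw.mul_const c),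
    mul_heatSol_mul_eq_integral w hσ ht, integral_mul_const, mul_comm c]

lemma tendsto_two_mul_div_sqrt_one_add_two_mul_sq :
    Tendsto (fun t : ℝ => 2 * t / √(1 + 2 * t) ^ 2) atTop (nhds 1) := by
  have h : Tendsto (fun t : ℝ => 1 - (1 + 2 * t)⁻¹) atTop (nhds (1 - 0)) :=
    tendsto_const_nhds.sub (tendsto_inv_atTop_zero.comp
      (tendsto_atTop_add_const_left _ 1 (tendsto_id.const_mul_atTop two_pos)))
  refine (sub_zero (1:ℝ) ▸ h).congr' ?_
  filter_upwards [eventually_gt_atTop 0] with t ht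
  rw [sq_sqrt (by linarith)]
  field_simp
  ring

theorem rescaled_heat_flow_tendsto_gaussian_general (u : ℝ → ℝ)
    (hu : Integrable u) :
    Tendsto (fun t => ∫ x,
        |Real.sqrt (1 + 2*t) * heatSol u t (x * Real.sqrt (1 + 2*t)) -
          gauss 1 x * ∫ y, u y|) atTop (nhds 0) := by
  have hvar := tendsto_two_mul_div_sqrt_one_add_two_mul_sq
  have hvar_pos : ∀ᶠ t : ℝ in atTop, 0 < 2 * t / √(1 + 2 * t) ^ 2 :=
    hvar.eventually (lt_mem_nhds one_pos)
  have hshift (z : ℝ) : Tendsto (fun t : ℝ => z / √(1 + 2 * t)) atTop (nhds 0) :=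
    tendsto_const_nhds.div_atTop (tendsto_sqrt_atTop.comp
      (tendsto_atTop_add_const_left _ 1 (tendsto_id.const_mul_atTop two_pos)))
  have hrepr : (fun t => ∫ x, |∫ z, u z *
        (gauss (2 * t / √(1 + 2 * t) ^ 2) (x - z / √(1 + 2 * t)) - gauss 1 x)|)
      =ᶠ[atTop] fun t => ∫ x, |√(1 + 2 * t) * heatSol u t (x * √(1 + 2 * t)) -
        gauss 1 x * ∫ y, u y| := by
    filter_upwards [eventually_gt_atTop 0] with t ht
    simp only [mul_heatSol_mul_sub_eq_integral hu (sqrt_pos.mpr (by linarith : 0 < 1 + 2 * t)) ht]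
  refine Tendsto.congr' hrepr (tendsto_integral_abs_integral_mul_of_tendsto (C := 2) hu
    (Eventually.of_forall fun t => Continuous.aestronglyMeasurable (by fun_prop))
    (hvar_pos.mono fun t ht => ae_of_all _ fun z =>
      ((integrable_gauss ht).comp_sub_right _).sub (integrable_gauss one_pos))
    (hvar_pos.mono fun t ht => ae_of_all _ fun z => by
      simpa using integral_abs_gauss_sub_gauss_le_two ht one_pos _ 0)
    (ae_of_all _ fun z => by
      simpa using tendsto_integral_abs_gauss_sub_gauss (a₀ := 0) one_pos hvar (hshift z)))

/-- The rescaled heat flow `U(x,t) = √(1+2t) u(x√(1+2t), t)` of a nonnegative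
`u ∈ L¹(ℝ)` converges in `L¹(ℝ)`, as `t → ∞`, to `M₁ ∫ u`, where `M₁` is the
standard Gaussian density of variance `1`. -/
theorem rescaled_heat_flow_tendsto_gaussian (u : ℝ → ℝ)
    (hu : Integrable u) (hu0 : ∀ x, 0 ≤ u x) :
    Tendsto (fun t => ∫ x,
        |Real.sqrt (1 + 2*t) * heatSol u t (x * Real.sqrt (1 + 2*t)) -
          gauss 1 x * ∫ y, u y|) atTop (nhds 0) :=
  rescaled_heat_flow_tendsto_gaussian_general u hu
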